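/- Let f = f_1 ∧ f_2 ∧ … ∧ f_s be a conjunction of Boolean functions f_1, …, f_s : {0,1}^n → {0,1}, where each f_j has a linear characteristic polynomial g_j over Z_m (m ≥ 2). Then {g_1, …, g_s} is a linear characteristic of f over Z_m, and consequently for every ε ∈ (0,1) there exist t ≤ ⌈(2/ε)·ln(2m)⌉ and integers k_1, …, k_t such that P(σ) = (1/t)·Σ_{i=1}^t Π_{j=1}^s cos²(π k_i g_j(σ) / m) equals 1 for every σ with f(σ) = 1 and is at most 1/2 + √ε/2 for every σ with f(σ) = 0. -/

import Mathlib

/-- The value of the linear polynomial `g(x) = c₀ + c₁x₁ + … + cₙxₙ` at a Boolean input. -/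
def linEval {n : ℕ} (c0 : ℤ) (c : Fin n → ℤ) (σ : Fin n → Bool) : ℤ :=
  c0 + ∑ i, c i * (if σ i then 1 else 0)

open Finset Real

/-!
Since `cos² x = (1 + cos 2x) / 2`, every factor `cos² (π k g / m)` equals `1` when `m ∣ g`, and
when some `g_j(σ)` is not divisible by `m` the product over `j` is at most the `j`-th factor, so
`P(σ) ≤ 1/2 + (1/2t) Σᵢ cos (2π kᵢ r / m)` with `r = g_j(σ) mod m ≠ 0`. The parameters are found
by the probabilistic method: for uniform `kᵢ ∈ ℤ_m` the cosines have mean zero (a geometric sum of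
roots of unity), so by convexity `E exp (l Σᵢ cos (2π kᵢ r / m)) ≤ exp (t l² / 2)`. With `l = √ε`
and `t ≥ (2/ε) ln (2m)`, a union bound over the `m - 1` nonzero residues leaves a choice of `k`
with `Σᵢ cos (2π kᵢ r / m) < t √ε` for all of them.
-/

lemma sum_range_cos_two_pi_mul_div_eq_zero {m : ℕ} {r : ℤ} (hr : ¬ (m : ℤ) ∣ r) :
    ∑ k ∈ range m, cos (2 * π * k * r / m) = 0 := by
  rcases Nat.eq_zero_or_pos m with rfl | hm
  · simp
  have hm' : (m : ℂ) ≠ 0 := by exact_mod_cast hm.ne'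
  set ζ : ℂ := Complex.exp (↑(2 * π * r / m) * Complex.I)
  have hcos : ∀ k : ℕ, cos (2 * π * k * r / m) = (ζ ^ k).re := by
    intro k
    rw [← Complex.exp_nat_mul, ← Complex.exp_ofReal_mul_I_re, ← mul_assoc]
    push_cast
    ring_nf
  have hζm : ζ ^ m = 1 := by
    rw [← Complex.exp_nat_mul, ← Complex.exp_int_mul_two_pi_mul_I r]
    congr 1
    push_cast
    field_simp
  have hζ1 : ζ ≠ 1 := by
    rw [Ne, Complex.exp_eq_one_iff]
    rintro ⟨n, hn⟩
    refine hr ⟨n, ?_⟩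
    have : (r : ℂ) = m * n := by
      push_cast at hn
      field_simp at hn
      linear_combination hn
    exact_mod_cast this
  simp_rw [hcos, ← Complex.re_sum, geom_sum_eq hζ1, hζm, sub_self, zero_div, Complex.zero_re]

lemma exp_mul_le_cosh_add_mul_sinh (l : ℝ) {x : ℝ} (hx : x ∈ Set.Icc (-1) 1) :
    exp (l * x) ≤ cosh l + x * sinh l := by
  have h := convexOn_exp.2 (Set.mem_univ l) (Set.mem_univ (-l))
    (show 0 ≤ (1 + x) / 2 by linarith [hx.1]) (show 0 ≤ (1 - x) / 2 by linarith [hx.2]) (by ring)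
  simp only [smul_eq_mul] at h
  calc exp (l * x) = exp ((1 + x) / 2 * l + (1 - x) / 2 * -l) := by ring_nf
    _ ≤ (1 + x) / 2 * exp l + (1 - x) / 2 * exp (-l) := h
    _ = cosh l + x * sinh l := by rw [cosh_eq, sinh_eq]; ring

lemma sum_range_exp_mul_cos_le {m : ℕ} {r : ℤ} (hr : ¬ (m : ℤ) ∣ r) (l : ℝ) :
    ∑ k ∈ range m, exp (l * cos (2 * π * k * r / m)) ≤ m * exp (l ^ 2 / 2) :=
  calc ∑ k ∈ range m, exp (l * cos (2 * π * k * r / m))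
      ≤ ∑ k ∈ range m, (cosh l + cos (2 * π * k * r / m) * sinh l) :=
        sum_le_sum fun _ _ => exp_mul_le_cosh_add_mul_sinh l ⟨neg_one_le_cos _, cos_le_one _⟩
    _ = m * cosh l := by
        rw [sum_add_distrib, ← sum_mul, sum_range_cos_two_pi_mul_div_eq_zero hr]
        simp
    _ ≤ m * exp (l ^ 2 / 2) := by
        gcongr
        exact cosh_le_exp_half_sq l

lemma sum_pi_exp_mul_sum_cos_le {m : ℕ} {r : ℤ} (hr : ¬ (m : ℤ) ∣ r) (t : ℕ) (l : ℝ) :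
    ∑ K : Fin t → Fin m, exp (l * ∑ i, cos (2 * π * (K i : ℕ) * r / m))
      ≤ (m * exp (l ^ 2 / 2)) ^ t :=
  calc ∑ K : Fin t → Fin m, exp (l * ∑ i, cos (2 * π * (K i : ℕ) * r / m))
      = (∑ k : Fin m, exp (l * cos (2 * π * (k : ℕ) * r / m))) ^ t := by
        simp_rw [Fintype.sum_pow, mul_sum, exp_sum]
    _ ≤ (m * exp (l ^ 2 / 2)) ^ t := by
        gcongr
        rw [Fin.sum_univ_eq_sum_range (fun k => exp (l * cos (2 * π * k * r / m)))]
        exact sum_range_exp_mul_cos_le hr l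

lemma cos_two_pi_mul_emod_div (m : ℕ) (k r : ℤ) :
    cos (2 * π * k * (r % m : ℤ) / m) = cos (2 * π * k * r / m) := by
  rcases eq_or_ne m 0 with rfl | hm
  · simp
  rw [← cos_add_int_mul_two_pi _ (k * (r / m))]
  congr 1
  conv_rhs => rw [← Int.emod_add_mul_ediv r m]
  push_cast
  field_simp

lemma exists_forall_sum_cos_lt {m t : ℕ} [NeZero m] {l : ℝ} (hl : 0 ≤ l)
    (hmt : (m : ℝ) ≤ exp (t * l ^ 2 / 2)) :
    ∃ k : Fin t → ℤ, ∀ r : ℤ, ¬ (m : ℤ) ∣ r → ∑ i, cos (2 * π * k i * r / m) < t * l := by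
  set R := Ioo (0 : ℤ) m
  set F : (Fin t → Fin m) → ℝ := fun K =>
    ∑ r ∈ R, exp (l * ∑ i, cos (2 * π * (K i : ℕ) * r / m))
  have hm : 0 < m := NeZero.pos m
  have hR : ∀ r ∈ R, ¬ (m : ℤ) ∣ r := fun r hr hdvd =>
    have ⟨hr0, hrm⟩ := mem_Ioo.1 hr
    hr0.ne' (Int.eq_zero_of_dvd_of_nonneg_of_lt hr0.le hrm hdvd)
  have hcard : (#R : ℝ) < m := by
    have : #R < m := by rw [Int.card_Ioo]; omega
    exact_mod_cast this
  -- Chernoff bound for each nonzero residue, summed over all of them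
  have hF : ∑ K, F K < ∑ _K : Fin t → Fin m, exp (t * l ^ 2) :=
    calc ∑ K, F K
        = ∑ r ∈ R, ∑ K : Fin t → Fin m, exp (l * ∑ i, cos (2 * π * (K i : ℕ) * r / m)) :=
          sum_comm
      _ ≤ ∑ _r ∈ R, ((m : ℝ) * exp (l ^ 2 / 2)) ^ t :=
          sum_le_sum fun r hr => sum_pi_exp_mul_sum_cos_le (hR r hr) t l
      _ = #R * exp (t * l ^ 2 / 2) * (m : ℝ) ^ t := by
          rw [sum_const, nsmul_eq_mul, mul_pow, ← exp_nat_mul]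
          ring_nf
      _ < exp (t * l ^ 2 / 2) * exp (t * l ^ 2 / 2) * (m : ℝ) ^ t := by
          gcongr
          exact hcard.trans_le hmt
      _ = ∑ _K : Fin t → Fin m, exp (t * l ^ 2) := by
          rw [← exp_add, sum_const, card_univ, Fintype.card_fun, Fintype.card_fin, Fintype.card_fin,
            nsmul_eq_mul]
          push_cast
          ring_nf
  obtain ⟨K, -, hK⟩ := exists_lt_of_sum_lt hF
  refine ⟨fun i => (K i : ℕ), fun r hr => ?_⟩
  have hrR : r % m ∈ R := mem_Ioo.2
    ⟨(Int.emod_nonneg r (by exact_mod_cast hm.ne')).lt_of_ne' (mt Int.dvd_of_emod_eq_zero hr),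
      Int.emod_lt_of_pos r (by exact_mod_cast hm)⟩
  have hexp : exp (l * ∑ i, cos (2 * π * (K i : ℕ) * (r % m : ℤ) / m)) < exp (l * (t * l)) :=
    (single_le_sum (f := fun r : ℤ => exp (l * ∑ i, cos (2 * π * (K i : ℕ) * r / m)))
      (fun _ _ => (exp_pos _).le) hrR).trans_lt
      (by rw [show l * (t * l) = t * l ^ 2 by ring]; exact hK)
  have := lt_of_mul_lt_mul_left (exp_lt_exp.1 hexp) hl
  calc ∑ i, cos (2 * π * (((K i : ℕ) : ℤ) : ℝ) * r / m)
      = ∑ i, cos (2 * π * (K i : ℕ) * (r % m : ℤ) / m) := sum_congr rfl fun i _ => by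
        rw [← cos_two_pi_mul_emod_div m _ r, Int.cast_natCast]
    _ < t * l := this

/-- The acceptance probability `P(σ)` of the fingerprinting program, where `g j = g_j(σ)`. -/
noncomputable def fingerprintAcceptance (m : ℕ) {s t : ℕ} (k : Fin t → ℤ) (g : Fin s → ℤ) : ℝ :=
  (1 / t) * ∑ i, ∏ j, cos (π * k i * g j / m) ^ 2

lemma fingerprintAcceptance_eq_one {m s t : ℕ} (ht : t ≠ 0) (k : Fin t → ℤ) {g : Fin s → ℤ}
    (hg : ∀ j, (m : ℤ) ∣ g j) : fingerprintAcceptance m k g = 1 := by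
  have hfactor : ∀ i j, cos (π * k i * g j / m) ^ 2 = 1 := by
    intro i j
    obtain ⟨q, hq⟩ := hg j
    rcases Nat.eq_zero_or_pos m with rfl | hm
    · simp_all
    rw [cos_sq, hq, show 2 * (π * k i * ((m * q : ℤ) : ℝ) / m) = (k i * q : ℤ) * (2 * π) by
      push_cast; field_simp, cos_int_mul_two_pi]
    norm_num
  simp [fingerprintAcceptance, hfactor, ht]

lemma fingerprintAcceptance_le {m s t : ℕ} (ht : t ≠ 0) {k : Fin t → ℤ} {g : Fin s → ℤ} {l : ℝ}
    (j : Fin s) (hk : ∑ i, cos (2 * π * k i * g j / m) ≤ t * l) :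
    fingerprintAcceptance m k g ≤ 1 / 2 + l / 2 := by
  have hfactor : ∀ i,
      ∏ j', cos (π * k i * g j' / m) ^ 2 ≤ 1 / 2 + cos (2 * π * k i * g j / m) / 2 := by
    intro i
    calc ∏ j', cos (π * k i * g j' / m) ^ 2 ≤ ∏ j' ∈ {j}, cos (π * k i * g j' / m) ^ 2 :=
          prod_le_prod_of_subset_of_le_one (subset_univ _) (fun _ _ => sq_nonneg _)
            (fun _ _ _ => cos_sq_le_one _)
      _ = 1 / 2 + cos (2 * π * k i * g j / m) / 2 := by rw [prod_singleton, cos_sq]; ring_nf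
  have htR : (0 : ℝ) < t := by positivity
  calc fingerprintAcceptance m k g ≤ (1 / t) * ∑ i, (1 / 2 + cos (2 * π * k i * g j / m) / 2) := by
        unfold fingerprintAcceptance
        gcongr with i
        exact hfactor i
    _ = 1 / 2 + (1 / t) * (∑ i, cos (2 * π * k i * g j / m)) / 2 := by
        rw [sum_add_distrib, sum_const, ← sum_div, card_univ, Fintype.card_fin, nsmul_eq_mul]
        generalize ∑ i, cos (2 * π * k i * g j / m) = S
        field_simp
    _ ≤ 1 / 2 + (1 / t) * (t * l) / 2 := by gcongr
    _ = 1 / 2 + l / 2 := by field_simp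

/-- If `f = f₁ ∧ … ∧ f_s` where each `f_j` has a linear characteristic polynomial
`g_j = c₀ⱼ + Σᵢ cᵢⱼxᵢ` over `ℤ_m`, then `{g₁,…,g_s}` is a linear characteristic of `f`
over `ℤ_m`, and for every `ε ∈ (0,1)` the generalized fingerprinting program with
`t ≤ ⌈(2/ε)·ln(2m)⌉` parameters accepts `f⁻¹(1)` with probability `1` and `f⁻¹(0)`
with probability at most `1/2 + √ε/2`. -/
theorem conjunction_fingerprinting (n s : ℕ) (m : ℕ) (hm : 2 ≤ m)
    (f : Fin s → (Fin n → Bool) → Bool) (c0 : Fin s → ℤ) (c : Fin s → Fin n → ℤ)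
    (hchar : ∀ (j : Fin s) (σ : Fin n → Bool),
      ((m : ℤ) ∣ linEval (c0 j) (c j) σ) ↔ f j σ = true) :
    (∀ σ : Fin n → Bool,
      (∀ j : Fin s, f j σ = true) ↔ ∀ j : Fin s, (m : ℤ) ∣ linEval (c0 j) (c j) σ) ∧
    (∀ ε : ℝ, 0 < ε → ε < 1 →
      ∃ t : ℕ, 0 < t ∧ t ≤ ⌈(2 / ε) * Real.log (2 * (m : ℝ))⌉₊ ∧
        ∃ k : Fin t → ℤ,
          ∀ σ : Fin n → Bool,
            ((∀ j : Fin s, f j σ = true) →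
              (1 / (t : ℝ)) *
                ∑ i, ∏ j, (Real.cos (Real.pi * (k i : ℝ) *
                  ((linEval (c0 j) (c j) σ : ℤ) : ℝ) / (m : ℝ))) ^ 2 = 1) ∧
            (¬ (∀ j : Fin s, f j σ = true) →
              (1 / (t : ℝ)) *
                ∑ i, ∏ j, (Real.cos (Real.pi * (k i : ℝ) *
                  ((linEval (c0 j) (c j) σ : ℤ) : ℝ) / (m : ℝ))) ^ 2
                ≤ 1 / 2 + Real.sqrt ε / 2)) := by
  refine ⟨fun σ => forall_congr' fun j => (hchar j σ).symm, fun ε hε _ => ?_⟩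
  set t := ⌈(2 / ε) * log (2 * (m : ℝ))⌉₊
  have hmR : (2 : ℝ) ≤ m := by exact_mod_cast hm
  have ht : 0 < t := Nat.ceil_pos.2 (mul_pos (by positivity) (log_pos (by linarith)))
  have hmt : (m : ℝ) ≤ exp (t * √ε ^ 2 / 2) := by
    have hlog : log (2 * m) ≤ t * ε / 2 := by
      rw [le_div_iff₀ two_pos]
      calc log (2 * m) * 2 = (2 / ε) * log (2 * m) * ε := by field_simp
        _ ≤ t * ε := by gcongr; exact Nat.le_ceil _
    calc (m : ℝ) ≤ exp (log (2 * m)) := by rw [exp_log (by positivity)]; linarith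
      _ ≤ exp (t * √ε ^ 2 / 2) := by rw [sq_sqrt hε.le]; exact exp_le_exp.2 hlog
  have : NeZero m := ⟨by omega⟩
  obtain ⟨k, hk⟩ := exists_forall_sum_cos_lt (sqrt_nonneg ε) hmt
  refine ⟨t, ht, le_rfl, k, fun σ => ⟨fun hf => ?_, fun hf => ?_⟩⟩
  · exact fingerprintAcceptance_eq_one ht.ne' k fun j => (hchar j σ).2 (hf j)
  · obtain ⟨j, hj⟩ := not_forall.1 hf
    exact fingerprintAcceptance_le ht.ne' j (hk _ (mt (hchar j σ).1 hj)).le
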